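/- arXiv:1803.00481 — 2 statements merged into one kernel-verified Lean document; each statement's English description precedes it below -/
import Mathlib

section
/- Under the standing assumptions, suppose W₂ is a final walk from 1 to j on the trellis digraph 𝒯_{Γ(k)} of maximal weight, i.e. p_𝒯(W₂) = v_j*. Then its length satisfies l(W₂) ≤ (v_j* − β_j)/λ* + (n − 1). -/
/-
Common framework for "A bound for the rank-one transient of inhomogeneous matrix
products in special case" (Kennedy-Cochran-Patrick, Sergeev, Berežný).

We work over the max-plus semiring, modelled inside `EReal` (so `⊥ = -∞` is the
max-plus zero and ordinary addition is the max-plus multiplication).  Matrices are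
functions `Fin m → Fin m → EReal`.  The distinguished node "1" of the paper is the
node `0 : Fin (n+2)` (so that `n + 2 ≥ 2` plays the role of the paper's `n ≥ 2`).

A walk is a nonempty list of nodes.  Walks on the trellis digraph of the product
`A 1 ⊗ ⋯ ⊗ A k` additionally record the level at which they start: the arc from the
`(l-1)`-st to the `l`-th node of a walk starting at level `s` has weight given by the
matrix `A (s + l)`.
-/

open scoped Classical

noncomputable section

namespace MaxPlusTransient

variable {m : ℕ}

/-- Weight of a walk on the trellis digraph, starting at level `s`. -/
def tw (M : ℕ → Fin m → Fin m → EReal) : ℕ → List (Fin m) → EReal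
  | _, [] => 0
  | _, [_] => 0
  | s, a :: b :: t => M (s + 1) a b + tw M (s + 1) (b :: t)

/-- Being a walk on the trellis digraph, starting at level `s` (all traversed arcs exist,
i.e. have weight `≠ -∞`); a walk is a nonempty list of nodes. -/
def twalk (M : ℕ → Fin m → Fin m → EReal) : ℕ → List (Fin m) → Prop
  | _, [] => False
  | _, [_] => True
  | s, a :: b :: t => M (s + 1) a b ≠ ⊥ ∧ twalk M (s + 1) (b :: t)

/-- Weight of a walk on the digraph `D_A` of a single matrix `A`. -/
def wWeight (A : Fin m → Fin m → EReal) (W : List (Fin m)) : EReal :=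
  tw (fun _ => A) 0 W

/-- Being a walk on the digraph `D_A` of a matrix `A`. -/
def isWalk (A : Fin m → Fin m → EReal) (W : List (Fin m)) : Prop :=
  twalk (fun _ => A) 0 W

/-- A path is a walk with no repeated nodes. -/
def isPath (A : Fin m → Fin m → EReal) (W : List (Fin m)) : Prop :=
  isWalk A W ∧ W.Nodup

/-- A cycle is a walk of length (number of arcs) at least one whose first and last
nodes coincide. -/
def isCycle (A : Fin m → Fin m → EReal) (W : List (Fin m)) : Prop :=
  isWalk A W ∧ 2 ≤ W.length ∧ W.head? = W.getLast?

/-- A matrix is irreducible iff its digraph is strongly connected. -/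
def irreducible (A : Fin m → Fin m → EReal) : Prop :=
  ∀ i j : Fin m, ∃ W, isWalk A W ∧ W.head? = some i ∧ W.getLast? = some j

/-- Geometric equivalence: the digraphs have the same arcs. -/
def geomEq (A B : Fin m → Fin m → EReal) : Prop :=
  ∀ i j, A i j = ⊥ ↔ B i j = ⊥

/-- Max-plus matrix product. -/
def mp (A B : Fin m → Fin m → EReal) : Fin m → Fin m → EReal :=
  fun i j => ⨆ s, A i s + B s j

/-- `Gamma M k = M 1 ⊗ M 2 ⊗ ⋯ ⊗ M k` (max-plus product), with `Gamma M 0` the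
max-plus identity matrix. -/
def Gamma (M : ℕ → Fin m → Fin m → EReal) : ℕ → Fin m → Fin m → EReal
  | 0 => fun i j => if i = j then 0 else ⊥
  | k + 1 => mp (Gamma M k) (M (k + 1))

/-- An initial walk from `i` to `one` on the trellis digraph of `M 1 ⊗ ⋯ ⊗ M k`:
it starts at node `i` at level `0`, ends at node `one` at some level `≤ k`, and the
only node of the walk equal to `one` is its final node. -/
def isInitialWalk (M : ℕ → Fin m → Fin m → EReal) (one : Fin m) (k : ℕ) (i : Fin m)
    (W : List (Fin m)) : Prop :=
  twalk M 0 W ∧ W.length - 1 ≤ k ∧ W.head? = some i ∧ W.getLast? = some one ∧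
    ∀ v ∈ W.dropLast, v ≠ one

/-- A final walk from `one` to `j` on the trellis digraph of `M 1 ⊗ ⋯ ⊗ M k`:
it starts at node `one` at some level `s`, ends at node `j` at level `k`, and the
only node of the walk equal to `one` is its first node. -/
def isFinalWalk (M : ℕ → Fin m → Fin m → EReal) (one : Fin m) (k : ℕ) (j : Fin m) (s : ℕ)
    (W : List (Fin m)) : Prop :=
  twalk M s W ∧ s + (W.length - 1) = k ∧ W.head? = some one ∧ W.getLast? = some j ∧
    ∀ v ∈ W.tail, v ≠ one

/-- A full walk from `i` to `j` on the trellis digraph of `M 1 ⊗ ⋯ ⊗ M k`: it goes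
from node `i` at level `0` to node `j` at level `k`. -/
def isFullWalk (M : ℕ → Fin m → Fin m → EReal) (k : ℕ) (i j : Fin m)
    (W : List (Fin m)) : Prop :=
  twalk M 0 W ∧ W.length = k + 1 ∧ W.head? = some i ∧ W.getLast? = some j

/-- `w_i*`: maximal weight of an initial walk from `i` to `one`. -/
def wStar (M : ℕ → Fin m → Fin m → EReal) (one : Fin m) (k : ℕ) (i : Fin m) : EReal :=
  sSup {x : EReal | ∃ W, isInitialWalk M one k i W ∧ x = tw M 0 W}

/-- `v_j*`: maximal weight of a final walk from `one` to `j`. -/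
def vStar (M : ℕ → Fin m → Fin m → EReal) (one : Fin m) (k : ℕ) (j : Fin m) : EReal :=
  sSup {x : EReal | ∃ s W, isFinalWalk M one k j s W ∧ x = tw M s W}

/-- `α_i`: maximal weight of a path on `D_A` from `i` to `one`. -/
def alphaE (A : Fin m → Fin m → EReal) (one : Fin m) (i : Fin m) : EReal :=
  sSup {x : EReal | ∃ W, isPath A W ∧ W.head? = some i ∧ W.getLast? = some one ∧
    x = wWeight A W}

/-- `β_j`: maximal weight of a path on `D_A` from `one` to `j`. -/
def betaE (A : Fin m → Fin m → EReal) (one : Fin m) (j : Fin m) : EReal :=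
  sSup {x : EReal | ∃ W, isPath A W ∧ W.head? = some one ∧ W.getLast? = some j ∧
    x = wWeight A W}

/-- `γ_{i,j}`: maximal weight of a path on `D_A` from `i` to `j` not passing through
`one` (`-∞` if no such path exists). -/
def gammaE (A : Fin m → Fin m → EReal) (one : Fin m) (i j : Fin m) : EReal :=
  sSup {x : EReal | ∃ W, isPath A W ∧ W.head? = some i ∧ W.getLast? = some j ∧
    (∀ v ∈ W, v ≠ one) ∧ x = wWeight A W}

/-- The set of mean weights of cycles of `D_A` avoiding the node `one`. -/
def lamSet (A : Fin m → Fin m → EReal) (one : Fin m) : Set ℝ :=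
  {x : ℝ | ∃ W, isCycle A W ∧ (∀ v ∈ W, v ≠ one) ∧
    ∃ r : ℝ, wWeight A W = (r : EReal) ∧ x = r / ((W.length : ℝ) - 1)}

/-- `λ*`: the supremum of the mean weights of cycles of `D_A` avoiding `one`. -/
def lamStar (A : Fin m → Fin m → EReal) (one : Fin m) : ℝ :=
  sSup (lamSet A one)

/-- `w_i`: maximal weight of a walk of length at most `k` from `i` to `one` on `D_A`. -/
def wInf (A : Fin m → Fin m → EReal) (one : Fin m) (k : ℕ) (i : Fin m) : EReal :=
  sSup {x : EReal | ∃ W, isWalk A W ∧ W.length - 1 ≤ k ∧ W.head? = some i ∧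
    W.getLast? = some one ∧ x = wWeight A W}

/-- `v_j`: maximal weight of a walk of length at most `k` from `one` to `j` on `D_A`. -/
def vInf (A : Fin m → Fin m → EReal) (one : Fin m) (k : ℕ) (j : Fin m) : EReal :=
  sSup {x : EReal | ∃ W, isWalk A W ∧ W.length - 1 ≤ k ∧ W.head? = some one ∧
    W.getLast? = some j ∧ x = wWeight A W}

/-- The standing assumptions of the paper on the set `𝒳` and its entrywise boundaries
`Asup` (supremum) and `Ainf` (infimum):
matrices of `𝒳` have no `+∞` entries, `Asup`/`Ainf` are the entrywise sup/inf,
`Asup` has no `+∞` entries and `Ainf` has no `-∞` entries where matrices of `𝒳` are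
finite; all matrices of `𝒳` and also `Ainf` are irreducible and pairwise geometrically
equivalent; every matrix of `𝒳` and also `Asup` has `(one, one)` entry `0` and all its
cycles other than (repetitions of) the loop at `one` have strictly negative (mean)
weight. -/
def Standing (𝒳 : Set (Fin m → Fin m → EReal)) (Asup Ainf : Fin m → Fin m → EReal)
    (one : Fin m) : Prop :=
  𝒳.Nonempty ∧
  (∀ X ∈ 𝒳, ∀ i j, X i j ≠ ⊤) ∧
  (∀ i j, Asup i j = ⨆ X ∈ 𝒳, X i j) ∧
  (∀ i j, Ainf i j = ⨅ X ∈ 𝒳, X i j) ∧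
  (∀ i j, Asup i j ≠ ⊤) ∧
  (∀ X ∈ 𝒳, ∀ i j, X i j ≠ ⊥ → Ainf i j ≠ ⊥) ∧
  (∀ X ∈ 𝒳, irreducible X) ∧
  irreducible Ainf ∧
  (∀ X ∈ 𝒳, geomEq X Ainf) ∧
  (∀ X ∈ 𝒳, X one one = 0) ∧
  (∀ X ∈ 𝒳, ∀ W, isCycle X W → (∃ v ∈ W, v ≠ one) → wWeight X W < 0) ∧
  Asup one one = 0 ∧
  (∀ W, isCycle Asup W → (∃ v ∈ W, v ≠ one) → wWeight Asup W < 0)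

/-!
Every arc of the trellis walk `W₂` is dominated by the corresponding arc of `A^sup`, so `W₂` is
a walk on `D_{A^sup}` of weight at least `v_j*`. Cutting out, again and again, the cycle at the
first repeated node of its tail (which avoids node 1) leaves a path from 1 to `j`, of weight at
most `β_j` and length at most `n - 1`, while every removed cycle of length `c` weighs at most
`λ* c`. Hence `v_j* ≤ β_j + λ* (l(W₂) - (n - 1))`, and dividing by `λ* < 0` gives the bound.
That `λ* < 0` follows from the same decomposition: the mean weight of every cycle avoiding 1 is
at most the largest mean weight of the finitely many elementary ones, each of them negative.
-/

section Walks

variable {A : Fin m → Fin m → EReal}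

lemma tw_const_level (A : Fin m → Fin m → EReal) :
    ∀ (W : List (Fin m)) (s t : ℕ), tw (fun _ => A) s W = tw (fun _ => A) t W
  | [], _, _ => rfl
  | [_], _, _ => rfl
  | a :: b :: T, s, t => by
    simp only [tw, tw_const_level A (b :: T) (s + 1) (t + 1)]

lemma twalk_const_level (A : Fin m → Fin m → EReal) :
    ∀ (W : List (Fin m)) (s t : ℕ), twalk (fun _ => A) s W ↔ twalk (fun _ => A) t W
  | [], _, _ => Iff.rfl
  | [_], _, _ => Iff.rfl
  | a :: b :: T, s, t => by
    simp only [twalk, twalk_const_level A (b :: T) (s + 1) (t + 1)]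

lemma wWeight_cons (a b : Fin m) (T : List (Fin m)) :
    wWeight A (a :: b :: T) = A a b + wWeight A (b :: T) := by
  simp only [wWeight, tw, tw_const_level A (b :: T) 1 0]

lemma isWalk_cons (a b : Fin m) (T : List (Fin m)) :
    isWalk A (a :: b :: T) ↔ A a b ≠ ⊥ ∧ isWalk A (b :: T) := by
  simp only [isWalk, twalk, twalk_const_level A (b :: T) 1 0]

lemma ne_nil_of_isWalk {W : List (Fin m)} (hW : isWalk A W) : W ≠ [] := by
  rintro rfl
  exact hW

lemma wWeight_append_cons (v : Fin m) :
    ∀ X Y : List (Fin m), wWeight A (X ++ v :: Y) = wWeight A (X ++ [v]) + wWeight A (v :: Y)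
  | [], _ => by simp [wWeight, tw]
  | [a], _ => by
    rw [List.cons_append, List.nil_append, wWeight_cons]
    simp [wWeight, tw]
  | a :: b :: X, Y => by
    have ih := wWeight_append_cons v (b :: X) Y
    simp only [List.cons_append] at ih ⊢
    rw [wWeight_cons, wWeight_cons, ih, add_assoc]

lemma isWalk_append_cons (v : Fin m) :
    ∀ X Y : List (Fin m), isWalk A (X ++ v :: Y) ↔ isWalk A (X ++ [v]) ∧ isWalk A (v :: Y)
  | [], _ => by simp [isWalk, twalk]
  | [a], _ => by
    rw [List.cons_append, List.nil_append, isWalk_cons]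
    simp [isWalk, twalk]
  | a :: b :: X, Y => by
    have ih := isWalk_append_cons v (b :: X) Y
    simp only [List.cons_append] at ih ⊢
    rw [isWalk_cons, isWalk_cons, ih, and_assoc]

lemma wWeight_ne_bot : ∀ {W : List (Fin m)}, isWalk A W → wWeight A W ≠ ⊥
  | [_], _ => by simp [wWeight, tw]
  | a :: b :: T, hW => by
    rw [isWalk_cons] at hW
    rw [wWeight_cons, Ne, EReal.add_eq_bot_iff, not_or]
    exact ⟨hW.1, wWeight_ne_bot hW.2⟩

/-- `P ++ u :: Y ++ u :: Z` parses as `(P ++ u :: Y) ++ u :: Z`: it is the cycle `u :: Y ++ [u]`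
spliced into the walk `P ++ u :: Z` at `u`. -/
lemma isWalk_splice_iff {P Y Z : List (Fin m)} {u : Fin m} :
    isWalk A (P ++ u :: Y ++ u :: Z) ↔ isWalk A (P ++ u :: Z) ∧ isWalk A (u :: Y ++ [u]) := by
  rw [isWalk_append_cons, List.append_assoc, List.cons_append, isWalk_append_cons,
    isWalk_append_cons u P Z]
  tauto

lemma wWeight_splice {P Y Z : List (Fin m)} {u : Fin m} :
    wWeight A (P ++ u :: Y ++ u :: Z) = wWeight A (P ++ u :: Z) + wWeight A (u :: Y ++ [u]) := by
  rw [wWeight_append_cons, List.append_assoc, List.cons_append, wWeight_append_cons,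
    wWeight_append_cons u P Z, add_right_comm]

lemma isCycle_of_isWalk {Y : List (Fin m)} {u : Fin m} (h : isWalk A (u :: Y ++ [u])) :
    isCycle A (u :: Y ++ [u]) :=
  ⟨h, by simp, by rw [List.getLast?_concat]; rfl⟩

end Walks

lemma _root_.List.exists_splice_of_not_nodup {α : Type*} :
    ∀ {T : List α}, ¬ T.Nodup → ∃ X Y Z u, T = X ++ u :: Y ++ u :: Z ∧ (u :: Y).Nodup
  | [], h => absurd List.nodup_nil h
  | a :: T, h => by
    by_cases hT : T.Nodup
    · have ha : a ∈ T := by simpa [hT] using h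
      obtain ⟨Y, Z, rfl⟩ := List.append_of_mem ha
      refine ⟨[], Y, Z, a, rfl, ?_⟩
      have := List.nodup_append.mp hT
      exact List.nodup_cons.mpr ⟨fun haY => this.2.2 a haY a (by simp) rfl, this.1⟩
    · obtain ⟨X, Y, Z, u, rfl, hY⟩ := List.exists_splice_of_not_nodup hT
      exact ⟨a :: X, Y, Z, u, rfl, hY⟩

/-- The cycles `C` with `C.tail.Nodup` are the elementary ones. -/
def ElementaryCycleMeanLE (A : Fin m → Fin m → EReal) (one : Fin m) (lam : ℝ) : Prop :=
  ∀ C, isCycle A C → C.tail.Nodup → (∀ v ∈ C, v ≠ one) →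
    wWeight A C ≤ ((lam * ((C.length : ℝ) - 1) : ℝ) : EReal)

def NegCyclesExceptLoop (A : Fin m → Fin m → EReal) (one : Fin m) : Prop :=
  ∀ W, isCycle A W → (∃ v ∈ W, v ≠ one) → wWeight A W < 0

section CycleRemoval

variable {A : Fin m → Fin m → EReal} {one : Fin m}

/-- Cutting the tail at its first repetition makes each removed cycle elementary. -/
theorem wWeight_le_of_tail_nodup_le {i j : Fin m} {c lam : ℝ}
    (hcyc : ElementaryCycleMeanLE A one lam)
    (hbase : ∀ W, isWalk A W → W.head? = some i → W.getLast? = some j → W.tail.Nodup →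
      (∀ v ∈ W.tail, v ≠ one) →
        wWeight A W ≤ ((c + lam * ((W.length : ℝ) - 1) : ℝ) : EReal))
    (W : List (Fin m)) (hW : isWalk A W) (hi : W.head? = some i) (hj : W.getLast? = some j)
    (hone : ∀ v ∈ W.tail, v ≠ one) :
    wWeight A W ≤ ((c + lam * ((W.length : ℝ) - 1) : ℝ) : EReal) := by
  induction hN : W.length using Nat.strong_induction_on generalizing W with
  | _ N ih =>
    subst hN
    by_cases hnd : W.tail.Nodup
    · exact hbase W hW hi hj hnd hone
    obtain ⟨w, T, rfl⟩ := List.exists_cons_of_ne_nil (ne_nil_of_isWalk hW)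
    obtain ⟨X, Y, Z, u, rfl, hY⟩ := List.exists_splice_of_not_nodup hnd
    change isWalk A (w :: X ++ u :: Y ++ u :: Z) at hW
    obtain ⟨hW', hC⟩ := isWalk_splice_iff.mp hW
    have hj' : (w :: X ++ u :: Z).getLast? = some j := by
      rw [← hj]
      simp only [List.getLast?_append, List.getLast?_cons, Option.some_or, Option.getD_some]
    have hone' : ∀ v ∈ (w :: X ++ u :: Z).tail, v ≠ one :=
      fun v hv => hone v (by simp only [List.tail_cons, List.cons_append, List.mem_append,
        List.mem_cons] at hv ⊢; tauto)
    have hC_one : ∀ v ∈ u :: Y ++ [u], v ≠ one :=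
      fun v hv => hone v (by simp only [List.tail_cons, List.cons_append, List.mem_append,
        List.mem_cons, List.not_mem_nil] at hv ⊢; tauto)
    have hC_nodup : (u :: Y ++ [u]).tail.Nodup := (List.perm_append_singleton u Y).nodup_iff.mpr hY
    have ih := ih _ (by simp) _ hW' hi hj' hone' rfl
    have hcycle := hcyc _ (isCycle_of_isWalk hC) hC_nodup hC_one
    change wWeight A (w :: X ++ u :: Y ++ u :: Z) ≤ _
    rw [wWeight_splice]
    refine (add_le_add ih hcycle).trans_eq ?_
    rw [← EReal.coe_add]
    congr 1
    simp only [List.length_append, List.length_cons, List.length_nil]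
    push_cast
    ring

theorem wWeight_le_betaE_add {j : Fin m} {b lam : ℝ} (hb : betaE A one j ≤ b) (hlam : lam ≤ 0)
    (hcyc : ElementaryCycleMeanLE A one lam)
    {W : List (Fin m)} (hW : isWalk A W) (hi : W.head? = some one) (hj : W.getLast? = some j)
    (hone : ∀ v ∈ W.tail, v ≠ one) :
    wWeight A W ≤ ((b + lam * ((W.length : ℝ) - m) : ℝ) : EReal) := by
  have key :=
    wWeight_le_of_tail_nodup_le (c := b - lam * ((m : ℝ) - 1)) hcyc ?_ W hW hi hj hone
  · convert key using 2
    ring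
  intro P hP hPi hPj hnd hPone
  obtain ⟨w, T, rfl⟩ := List.exists_cons_of_ne_nil (ne_nil_of_isWalk hP)
  obtain rfl : w = one := by simpa using hPi
  have hpath : isPath A (w :: T) := ⟨hP, List.nodup_cons.mpr ⟨fun h => hPone w h rfl, hnd⟩⟩
  have hlen : ((w :: T).length : ℝ) ≤ m := by
    exact_mod_cast hpath.2.length_le_card.trans_eq (Fintype.card_fin m)
  calc wWeight A (w :: T) ≤ betaE A w j := le_sSup ⟨_, hpath, hPi, hPj, rfl⟩
    _ ≤ b := hb
    _ ≤ _ := EReal.coe_le_coe_iff.mpr (by nlinarith)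

theorem wWeight_cycle_le_of_elementary {lam : ℝ}
    (hcyc : ElementaryCycleMeanLE A one lam)
    {C : List (Fin m)} (hC : isCycle A C) (hone : ∀ v ∈ C, v ≠ one) :
    wWeight A C ≤ ((lam * ((C.length : ℝ) - 1) : ℝ) : EReal) := by
  obtain ⟨u, T, rfl⟩ := List.exists_cons_of_ne_nil (ne_nil_of_isWalk hC.1)
  have hu : u ≠ one := hone u (List.mem_cons_self ..)
  have key := wWeight_le_of_tail_nodup_le (i := u) (j := u) (c := 0) hcyc ?_ _ hC.1 rfl
    hC.2.2.symm (fun v hv => hone v (List.mem_cons_of_mem u hv))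
  · simpa using key
  intro P hP hPi hPj hnd hPone
  obtain ⟨w, T', rfl⟩ := List.exists_cons_of_ne_nil (ne_nil_of_isWalk hP)
  obtain rfl : w = u := by simpa using hPi
  rcases T' with _ | ⟨x, T'⟩
  · simp [wWeight, tw]
  have hPC : isCycle A (w :: x :: T') := ⟨hP, by simp, hPi.trans hPj.symm⟩
  have hPone' : ∀ v ∈ w :: x :: T', v ≠ one := by
    rintro v (_ | ⟨_, hv⟩)
    exacts [hu, hPone v hv]
  simpa using hcyc _ hPC hnd hPone'

end CycleRemoval

section CycleMeans

variable {A : Fin m → Fin m → EReal} {one : Fin m}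

lemma length_sub_one_pos {C : List (Fin m)} (hC : isCycle A C) :
    (0 : ℝ) < (C.length : ℝ) - 1 := by
  have : (2 : ℝ) ≤ C.length := by exact_mod_cast hC.2.1
  linarith

lemma exists_elementary_cycle {C : List (Fin m)} (hC : isCycle A C)
    (hone : ∀ v ∈ C, v ≠ one) :
    ∃ C', isCycle A C' ∧ C'.tail.Nodup ∧ ∀ v ∈ C', v ≠ one := by
  by_cases hnd : C.tail.Nodup
  · exact ⟨C, hC, hnd, hone⟩
  obtain ⟨w, T, rfl⟩ := List.exists_cons_of_ne_nil (ne_nil_of_isWalk hC.1)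
  obtain ⟨X, Y, Z, u, rfl, hY⟩ := List.exists_splice_of_not_nodup hnd
  have hCY := (isWalk_splice_iff (P := w :: X)).mp hC.1
  refine ⟨_, isCycle_of_isWalk hCY.2, (List.perm_append_singleton u Y).nodup_iff.mpr hY,
    fun v hv => hone v ?_⟩
  simp only [List.cons_append, List.mem_append, List.mem_cons, List.not_mem_nil] at hv ⊢
  tauto

lemma wWeight_lt_zero (hneg : NegCyclesExceptLoop A one)
    {C : List (Fin m)} (hC : isCycle A C) (hone : ∀ v ∈ C, v ≠ one) :
    wWeight A C < 0 := by
  obtain ⟨v, hv⟩ := List.exists_mem_of_ne_nil _ (ne_nil_of_isWalk hC.1)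
  exact hneg C hC ⟨v, hv, hone v hv⟩

lemma coe_toReal_wWeight (hneg : NegCyclesExceptLoop A one)
    {C : List (Fin m)} (hC : isCycle A C) (hone : ∀ v ∈ C, v ≠ one) :
    ((wWeight A C).toReal : EReal) = wWeight A C :=
  EReal.coe_toReal (wWeight_lt_zero hneg hC hone).ne_top (wWeight_ne_bot hC.1)

lemma toReal_wWeight_neg (hneg : NegCyclesExceptLoop A one)
    {C : List (Fin m)} (hC : isCycle A C) (hone : ∀ v ∈ C, v ≠ one) :
    (wWeight A C).toReal < 0 :=
  EReal.toReal_neg (wWeight_lt_zero hneg hC hone) (wWeight_ne_bot hC.1)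

lemma bddAbove_lamSet (hneg : NegCyclesExceptLoop A one) : BddAbove (lamSet A one) := by
  refine ⟨0, ?_⟩
  rintro _ ⟨C, hC, hone, y, hy, rfl⟩
  have hy : y < 0 := by exact_mod_cast hy ▸ wWeight_lt_zero hneg hC hone
  exact div_nonpos_of_nonpos_of_nonneg hy.le (length_sub_one_pos hC).le

theorem wWeight_le_lamStar_mul (hneg : NegCyclesExceptLoop A one)
    {C : List (Fin m)} (hC : isCycle A C) (hone : ∀ v ∈ C, v ≠ one) :
    wWeight A C ≤ ((lamStar A one * ((C.length : ℝ) - 1) : ℝ) : EReal) := by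
  rw [← coe_toReal_wWeight hneg hC hone, EReal.coe_le_coe_iff,
    ← div_le_iff₀ (length_sub_one_pos hC)]
  exact le_csSup (bddAbove_lamSet hneg)
    ⟨C, hC, hone, _, (coe_toReal_wWeight hneg hC hone).symm, rfl⟩

theorem lamStar_neg (hneg : NegCyclesExceptLoop A one)
    (hex : ∃ C, isCycle A C ∧ ∀ v ∈ C, v ≠ one) : lamStar A one < 0 := by
  set S := {C : List (Fin m) | isCycle A C ∧ C.tail.Nodup ∧ ∀ v ∈ C, v ≠ one}
  have hfin : S.Finite := (List.finite_length_le (Fin m) (m + 1)).subset fun C hC => by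
    have := hC.2.1.length_le_card
    simp only [List.length_tail, Fintype.card_fin] at this
    show C.length ≤ m + 1
    omega
  obtain ⟨C, hC, hone⟩ := hex
  obtain ⟨C₀, ⟨hC₀, -, hone₀⟩, hmax⟩ := S.exists_max_image
    (fun C => (wWeight A C).toReal / ((C.length : ℝ) - 1)) hfin (exists_elementary_cycle hC hone)
  set μ := (wWeight A C₀).toReal / ((C₀.length : ℝ) - 1)
  have hμ : μ < 0 :=
    div_neg_of_neg_of_pos (toReal_wWeight_neg hneg hC₀ hone₀) (length_sub_one_pos hC₀)
  have hcyc : ElementaryCycleMeanLE A one μ := fun C' hC' hnd hone' => by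
    rw [← coe_toReal_wWeight hneg hC' hone', EReal.coe_le_coe_iff,
      ← div_le_iff₀ (length_sub_one_pos hC')]
    exact hmax C' ⟨hC', hnd, hone'⟩
  refine lt_of_le_of_lt (csSup_le
    ⟨_, C, hC, hone, _, (coe_toReal_wWeight hneg hC hone).symm, rfl⟩ ?_) hμ
  rintro _ ⟨C', hC', hone', y, hy, rfl⟩
  have hle := wWeight_cycle_le_of_elementary hcyc hC' hone'
  rw [hy, EReal.coe_le_coe_iff] at hle
  exact (div_le_iff₀ (length_sub_one_pos hC')).mpr hle

end CycleMeans

section Trellis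

variable {M : ℕ → Fin m → Fin m → EReal} {A : Fin m → Fin m → EReal} {k : ℕ}

theorem isWalk_of_twalk (hle : ∀ l, 1 ≤ l → l ≤ k → ∀ a b, M l a b ≤ A a b) :
    ∀ {W : List (Fin m)} {s : ℕ}, twalk M s W → s + (W.length - 1) ≤ k → isWalk A W
  | [_], _, _, _ => trivial
  | a :: b :: T, s, ⟨hab, hT⟩, hk => by
    simp only [List.length_cons] at hk
    have hab' := ne_bot_of_le_ne_bot hab (hle _ (by omega) (by omega) a b)
    exact (isWalk_cons a b T).mpr
      ⟨hab', isWalk_of_twalk hle hT (by simp only [List.length_cons]; omega)⟩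

theorem tw_le_wWeight (hle : ∀ l, 1 ≤ l → l ≤ k → ∀ a b, M l a b ≤ A a b) :
    ∀ {W : List (Fin m)} {s : ℕ}, s + (W.length - 1) ≤ k → tw M s W ≤ wWeight A W
  | [], _, _ => le_rfl
  | [_], _, _ => le_rfl
  | a :: b :: T, s, hk => by
    simp only [List.length_cons] at hk
    rw [wWeight_cons]
    exact add_le_add (hle _ (by omega) (by omega) a b)
      (tw_le_wWeight hle (by simp only [List.length_cons]; omega))

end Trellis

theorem rank_one_transient_statement1_general {n : ℕ}
    (𝒳 : Set (Fin (n + 2) → Fin (n + 2) → EReal))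
    (Asup Ainf : Fin (n + 2) → Fin (n + 2) → EReal)
    (hstand : Standing 𝒳 Asup Ainf 0)
    (k : ℕ)
    (A : ℕ → Fin (n + 2) → Fin (n + 2) → EReal)
    (hA : ∀ l, 1 ≤ l → l ≤ k → A l ∈ 𝒳)
    (hcyc : ∃ W, isCycle Asup W ∧ ∀ v ∈ W, v ≠ (0 : Fin (n + 2)))
    (j : Fin (n + 2))
    -- `β_j` is the (finite) maximal weight of a path from `one` to `j` on `D_{A^sup}`
    (b : ℝ) (hb : (b : EReal) = betaE Asup 0 j)
    -- `W₂` is a final walk from `one` to `j` of maximal weight `v_j* = r`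
    (r : ℝ) (s : ℕ) (W₂ : List (Fin (n + 2)))
    (h2 : isFinalWalk A 0 k j s W₂)
    (hw : tw A s W₂ = (r : EReal)) :
    (W₂.length : ℝ) - 1 ≤ (r - b) / lamStar Asup 0 + ((n + 2 : ℝ) - 1) := by
  obtain ⟨-, -, hsup, -, -, -, -, -, -, -, -, -, hneg⟩ := hstand
  obtain ⟨htw, hlev, hhead, hlast, htail⟩ := h2
  have hle : ∀ l, 1 ≤ l → l ≤ k → ∀ a c, A l a c ≤ Asup a c := fun l h1 h2 a c =>
    (hsup a c).symm ▸ le_biSup (fun X => X a c) (hA l h1 h2)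
  have hlam := lamStar_neg hneg hcyc
  have hbound := wWeight_le_betaE_add hb.ge hlam.le
    (fun C hC _ hone => wWeight_le_lamStar_mul hneg hC hone)
    (isWalk_of_twalk hle htw hlev.le) hhead hlast htail
  have hr : r ≤ b + lamStar Asup 0 * ((W₂.length : ℝ) - (n + 2 : ℕ)) :=
    EReal.coe_le_coe_iff.mp (hw ▸ (tw_le_wWeight hle hlev.le).trans hbound)
  have hlen : (W₂.length : ℝ) - (n + 2) ≤ (r - b) / lamStar Asup 0 := by
    rw [le_div_iff_of_neg hlam]
    push_cast at hr
    linarith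
  linarith

/-- length bound for a maximal-weight final walk. -/
theorem rank_one_transient_statement1 {n : ℕ}
    (𝒳 : Set (Fin (n + 2) → Fin (n + 2) → EReal))
    (Asup Ainf : Fin (n + 2) → Fin (n + 2) → EReal)
    (hstand : Standing 𝒳 Asup Ainf 0)
    (k : ℕ) (hk : 1 ≤ k)
    (A : ℕ → Fin (n + 2) → Fin (n + 2) → EReal)
    (hA : ∀ l, 1 ≤ l → l ≤ k → A l ∈ 𝒳)
    (hcyc : ∃ W, isCycle Asup W ∧ ∀ v ∈ W, v ≠ (0 : Fin (n + 2)))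
    (j : Fin (n + 2))
    -- `β_j` is the (finite) maximal weight of a path from `one` to `j` on `D_{A^sup}`
    (b : ℝ) (hb : (b : EReal) = betaE Asup 0 j)
    -- `W₂` is a final walk from `one` to `j` of maximal weight `v_j* = r`
    (r : ℝ) (s : ℕ) (W₂ : List (Fin (n + 2)))
    (h2 : isFinalWalk A 0 k j s W₂)
    (hw : tw A s W₂ = (r : EReal))
    (hopt : (r : EReal) = vStar A 0 k j) :
    (W₂.length : ℝ) - 1 ≤ (r - b) / lamStar Asup 0 + ((n + 2 : ℝ) - 1) :=
  rank_one_transient_statement1_general 𝒳 Asup Ainf hstand k A hA hcyc j b hb r s W₂ h2 hw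

end MaxPlusTransient
end
end

section
/- Under the standing assumptions, suppose k > (w_i* + v_j* − γ_{i,j})/λ* + (n − 1). Then every full walk from i to j on 𝒯_{Γ(k)} that does not pass through node 1 has weight strictly smaller than w_i* + v_j*. -/
/-
Common framework for "A bound for the rank-one transient of inhomogeneous matrix
products in special case" (Kennedy-Cochran-Patrick, Sergeev, Berežný).

We work over the max-plus semiring, modelled inside `EReal` (so `⊥ = -∞` is the
max-plus zero and ordinary addition is the max-plus multiplication).  Matrices are
functions `Fin m → Fin m → EReal`.  The distinguished node "1" of the paper is the
node `0 : Fin (n+2)` (so that `n + 2 ≥ 2` plays the role of the paper's `n ≥ 2`).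

A walk is a nonempty list of nodes.  Walks on the trellis digraph of the product
`A 1 ⊗ ⋯ ⊗ A k` additionally record the level at which they start: the arc from the
`(l-1)`-st to the `l`-th node of a walk starting at level `s` has weight given by the
matrix `A (s + l)`.
-/

open scoped Classical

noncomputable section

namespace MaxPlusTransient

variable {m : ℕ}

/-! ### Auxiliary machinery for Statement 3 -/

/-- real weight of a walk w.r.t. a single matrix -/
def rWt (B : Fin m → Fin m → EReal) : List (Fin m) → ℝ
  | [] => 0
  | [_] => 0
  | a :: b :: t => (B a b).toReal + rWt B (b :: t)

theorem twalk_const_iff_chain' (B : Fin m → Fin m → EReal) :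
    ∀ (W : List (Fin m)), W ≠ [] → ∀ s : ℕ,
      (twalk (fun _ => B) s W ↔ W.Chain' (fun x y => B x y ≠ ⊥)) := by
  intro W
  induction W with
  | nil => intro h; exact absurd rfl h
  | cons a t ih =>
    intro _ s
    cases t with
    | nil => simp [twalk, List.Chain']
    | cons b t' =>
      rw [List.Chain', List.isChain_cons_cons]
      constructor
      · rintro ⟨h1, h2⟩; exact ⟨h1, (ih (by simp) (s+1)).mp h2⟩
      · rintro ⟨h1, h2⟩; exact ⟨h1, (ih (by simp) (s+1)).mpr h2⟩

theorem isWalk_iff_chain' (B : Fin m → Fin m → EReal) {W : List (Fin m)} (h : W ≠ []) :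
    isWalk B W ↔ W.Chain' (fun x y => B x y ≠ ⊥) :=
  twalk_const_iff_chain' B W h 0

theorem tw_eq_rWt (B : Fin m → Fin m → EReal) (htop : ∀ a b, B a b ≠ ⊤) :
    ∀ (W : List (Fin m)) (s : ℕ), twalk (fun _ => B) s W →
      tw (fun _ => B) s W = ((rWt B W : ℝ) : EReal) := by
  intro W
  induction W with
  | nil => intro s h; exact absurd h (by simp [twalk])
  | cons a t ih =>
    intro s h
    cases t with
    | nil => simp [tw, rWt]
    | cons b t' =>
      obtain ⟨h1, h2⟩ := h
      simp only [tw, rWt, EReal.coe_add, ih (s+1) h2]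
      congr 1
      exact (EReal.coe_toReal (htop a b) h1).symm

theorem tw_le_tw (M : ℕ → Fin m → Fin m → EReal) (B : Fin m → Fin m → EReal) :
    ∀ (W : List (Fin m)) (s : ℕ),
      (∀ l, s + 1 ≤ l → l < s + W.length → ∀ a b, M l a b ≤ B a b) →
      tw M s W ≤ tw (fun _ => B) s W := by
  intro W
  induction W with
  | nil => intro s _; simp [tw]
  | cons a t ih =>
    intro s hle
    cases t with
    | nil => simp [tw]
    | cons b t' =>
      simp only [tw]
      refine add_le_add (hle (s+1) le_rfl (by simp only [List.length_cons]; omega) a b)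
        (ih (s+1) ?_)
      intro l h1 h2 a' b'
      exact hle l (by omega) (by simp only [List.length_cons] at h2 ⊢; omega) a' b'

theorem twalk_mono (M : ℕ → Fin m → Fin m → EReal) (B : Fin m → Fin m → EReal) :
    ∀ (W : List (Fin m)) (s : ℕ), twalk M s W →
      (∀ l, s + 1 ≤ l → l < s + W.length → ∀ a b, M l a b ≤ B a b) →
      twalk (fun _ => B) s W := by
  intro W
  induction W with
  | nil => intro s h _; exact absurd h (by simp [twalk])
  | cons a t ih =>
    intro s h hle
    cases t with
    | nil => trivial
    | cons b t' =>
      obtain ⟨h1, h2⟩ := h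
      refine ⟨fun hb => h1 ?_, ih (s+1) h2 ?_⟩
      · have hthis := hle (s+1) le_rfl (by simp only [List.length_cons]; omega) a b
        have hb' : B a b = ⊥ := hb
        rw [hb'] at hthis
        exact le_bot_iff.mp hthis
      · intro l hl1 hl2 a' b'
        exact hle l (by omega) (by simp only [List.length_cons] at hl2 ⊢; omega) a' b'

theorem rWt_append_cons (B : Fin m → Fin m → EReal) (l₁ : List (Fin m)) (a : Fin m)
    (l₂ : List (Fin m)) :
    rWt B (l₁ ++ a :: l₂) = rWt B (l₁ ++ [a]) + rWt B (a :: l₂) := by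
  induction l₁ with
  | nil => simp [rWt]
  | cons x t ih =>
    cases t with
    | nil => simp [rWt]
    | cons y t' =>
      simp only [List.cons_append] at ih ⊢
      simp only [rWt]
      rw [ih]; ring

theorem rWt_split (B : Fin m → Fin m → EReal) (l₁ : List (Fin m)) (x : Fin m)
    (l₂ l₃ : List (Fin m)) :
    rWt B (l₁ ++ x :: (l₂ ++ x :: l₃)) =
      rWt B (l₁ ++ x :: l₃) + rWt B (x :: (l₂ ++ [x])) := by
  have h1 := rWt_append_cons B l₁ x (l₂ ++ x :: l₃)
  have h2 := rWt_append_cons B (x :: l₂) x l₃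
  have h3 := rWt_append_cons B l₁ x l₃
  simp only [List.cons_append] at h2
  rw [h1, h2, h3]; ring

theorem split_of_not_nodup {α : Type*} {l : List α} (h : ¬ l.Nodup) :
    ∃ (x : α) (l₁ l₂ l₃ : List α), l = l₁ ++ x :: (l₂ ++ x :: l₃) := by
  induction l with
  | nil => simp at h
  | cons a t ih =>
    rw [List.nodup_cons] at h
    by_cases hm : a ∈ t
    · obtain ⟨s, t', rfl⟩ := List.append_of_mem hm
      exact ⟨a, [], s, t', by simp⟩
    · obtain ⟨x, l₁, l₂, l₃, rfl⟩ := ih (fun hn => h ⟨hm, hn⟩)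
      exact ⟨x, a :: l₁, l₂, l₃, by simp⟩

theorem nodup_avoid_length {n : ℕ} {l : List (Fin (n+2))}
    (h0 : ∀ v ∈ l, v ≠ (0 : Fin (n+2))) (hn : l.Nodup) : l.length ≤ n + 1 := by
  have h1 : l.toFinset ⊆ Finset.univ.erase (0 : Fin (n+2)) := by
    intro v hv
    exact Finset.mem_erase.mpr ⟨h0 v (List.mem_toFinset.mp hv), Finset.mem_univ v⟩
  have h2 := Finset.card_le_card h1
  rw [List.toFinset_card_of_nodup hn] at h2
  have h3 : (Finset.univ.erase (0 : Fin (n+2))).card = n + 1 := by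
    rw [Finset.card_erase_of_mem (Finset.mem_univ _)]
    simp
  omega

theorem chain'_split {α : Type*} {R : α → α → Prop} {l₁ l₂ l₃ : List α} {x : α}
    (h : (l₁ ++ x :: (l₂ ++ x :: l₃)).Chain' R) :
    (l₁ ++ x :: l₃).Chain' R ∧ (x :: (l₂ ++ [x])).Chain' R := by
  rw [List.Chain', List.isChain_append] at h
  obtain ⟨h1, h2, h3⟩ := h
  have hsuf : (x :: l₃).Chain' R := h2.suffix ⟨x :: l₂, by simp⟩
  have hpre : (x :: (l₂ ++ [x])).Chain' R := h2.infix ⟨[], l₃, by simp⟩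
  refine ⟨List.isChain_append.mpr ⟨h1, hsuf, ?_⟩, hpre⟩
  intro p hp y hy
  simp only [List.head?_cons, Option.mem_def, Option.some.injEq] at hy
  subst hy
  exact h3 p hp x (by simp)

theorem head?_split {α : Type*} (l₁ : List α) (x : α) (l l' : List α) :
    (l₁ ++ x :: l).head? = (l₁ ++ x :: l').head? := by
  cases l₁ <;> simp

theorem getLast?_split {α : Type*} (l₁ : List α) (x : α) (l₂ l₃ : List α) :
    (l₁ ++ x :: (l₂ ++ x :: l₃)).getLast? = (l₁ ++ x :: l₃).getLast? := by
  rw [show l₁ ++ x :: (l₂ ++ x :: l₃) = (l₁ ++ x :: l₂) ++ (x :: l₃) by simp,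
    List.getLast?_append_of_ne_nil (l₁ := l₁ ++ x :: l₂) (by simp),
    List.getLast?_append_of_ne_nil (l₁ := l₁) (by simp)]

theorem part_isCycle {B : Fin m → Fin m → EReal} {l₁ : List (Fin m)} {x : Fin m}
    {l₂ l₃ : List (Fin m)}
    (hch : (l₁ ++ x :: (l₂ ++ x :: l₃)).Chain' (fun a b => B a b ≠ ⊥)) :
    isCycle B (x :: (l₂ ++ [x])) := by
  refine ⟨(isWalk_iff_chain' B (by simp)).mpr (chain'_split hch).2,
    by simp only [List.length_cons, List.length_append, List.length_singleton]; omega, ?_⟩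
  have h1 : x :: (l₂ ++ [x]) = (x :: l₂) ++ [x] := by simp
  rw [h1, List.getLast?_append_of_ne_nil (l₁ := x :: l₂) (by simp)]
  simp

/-- Splitting a long cycle avoiding `0`. -/
theorem cycle_split {n : ℕ} {B : Fin (n+2) → Fin (n+2) → EReal} {W : List (Fin (n+2))}
    (hc : isCycle B W) (h0 : ∀ v ∈ W, v ≠ (0 : Fin (n+2))) (hlong : n + 4 ≤ W.length) :
    ∃ (l₁ : List (Fin (n+2))) (x : Fin (n+2)) (l₂ l₃ : List (Fin (n+2))),
      W = l₁ ++ x :: (l₂ ++ x :: l₃) ∧ l₃ ≠ [] := by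
  have hne : W ≠ [] := by intro h; rw [h] at hlong; simp at hlong
  have hW : W.dropLast ++ [W.getLast hne] = W := List.dropLast_append_getLast hne
  have hlen : W.dropLast.length = W.length - 1 := List.length_dropLast
  have hnd : ¬ W.dropLast.Nodup := by
    intro hnd
    have := nodup_avoid_length (fun v hv => h0 v (List.dropLast_subset W hv)) hnd
    omega
  obtain ⟨x, l₁, l₂, l₃', heq⟩ := split_of_not_nodup hnd
  refine ⟨l₁, x, l₂, l₃' ++ [W.getLast hne], ?_, by simp⟩
  conv_lhs => rw [← hW, heq]
  simp
section CycleMachinery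

variable {n : ℕ} {B : Fin (n+2) → Fin (n+2) → EReal}

theorem rWt_cycle_neg (htop : ∀ a b, B a b ≠ ⊤)
    (hcycE : ∀ W, isCycle B W → (∃ v ∈ W, v ≠ (0 : Fin (n+2))) → wWeight B W < 0)
    {C : List (Fin (n+2))} (hC : isCycle B C) (h0 : ∀ v ∈ C, v ≠ (0 : Fin (n+2))) :
    rWt B C < 0 := by
  have hne : C ≠ [] := by rintro rfl; simpa using hC.2.1
  obtain ⟨a, t, rfl⟩ := List.exists_cons_of_ne_nil hne
  have hlt := hcycE _ hC ⟨a, by simp, h0 a (by simp)⟩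
  rw [wWeight, tw_eq_rWt B htop _ 0 hC.1] at hlt
  exact_mod_cast hlt

theorem mean_mem_lamSet (htop : ∀ a b, B a b ≠ ⊤)
    {C : List (Fin (n+2))} (hC : isCycle B C) (h0 : ∀ v ∈ C, v ≠ (0 : Fin (n+2))) :
    rWt B C / ((C.length : ℝ) - 1) ∈ lamSet B 0 :=
  ⟨C, hC, h0, rWt B C, tw_eq_rWt B htop C 0 hC.1, rfl⟩

/-- Every cycle avoiding `0` can be shortened to one of length at most `n+3`. -/
theorem exists_short_cycle
    (hcyc : ∃ W, isCycle B W ∧ ∀ v ∈ W, v ≠ (0 : Fin (n+2))) :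
    ∃ C, isCycle B C ∧ (∀ v ∈ C, v ≠ (0 : Fin (n+2))) ∧ C.length ≤ n + 3 := by
  obtain ⟨W0, hW0, h00⟩ := hcyc
  suffices h : ∀ (N : ℕ) (C : List (Fin (n+2))), C.length ≤ N → isCycle B C →
      (∀ v ∈ C, v ≠ (0 : Fin (n+2))) →
      ∃ C', isCycle B C' ∧ (∀ v ∈ C', v ≠ (0 : Fin (n+2))) ∧ C'.length ≤ n + 3 by
    exact h W0.length W0 le_rfl hW0 h00
  intro N
  induction N with
  | zero => intro C hl hC _; have := hC.2.1; omega
  | succ N ih =>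
    intro C hl hC h0
    by_cases hshort : C.length ≤ n + 3
    · exact ⟨C, hC, h0, hshort⟩
    · obtain ⟨l₁, x, l₂, l₃, heq, hl₃⟩ := cycle_split hC h0 (by omega)
      subst heq
      have hch := (isWalk_iff_chain' B (by simp)).mp hC.1
      have hC₁ := part_isCycle hch
      have hlen : (l₁ ++ x :: (l₂ ++ x :: l₃)).length
          = l₁.length + l₂.length + l₃.length + 2 := by
        simp only [List.length_append, List.length_cons]; omega
      have hlen₁ : (x :: (l₂ ++ [x])).length = l₂.length + 2 := by
        simp only [List.length_cons, List.length_append, List.length_nil]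
      have hl₃' : 1 ≤ l₃.length := List.length_pos_iff.mpr hl₃
      refine ih (x :: (l₂ ++ [x])) (by omega) hC₁ ?_
      intro v hv
      refine h0 v ?_
      simp only [List.mem_cons, List.mem_append, List.mem_singleton] at hv ⊢
      tauto

/-- Bound on cycle weights from a bound on short-cycle weights (by cycle decomposition). -/
theorem cycle_rWt_le_of_short_ub {lam : ℝ}
    (hub : ∀ C, isCycle B C → (∀ v ∈ C, v ≠ (0 : Fin (n+2))) → C.length ≤ n + 3 →
      rWt B C ≤ lam * ((C.length : ℝ) - 1)) :
    ∀ C, isCycle B C → (∀ v ∈ C, v ≠ (0 : Fin (n+2))) →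
      rWt B C ≤ lam * ((C.length : ℝ) - 1) := by
  suffices h : ∀ (N : ℕ) (C : List (Fin (n+2))), C.length ≤ N → isCycle B C →
      (∀ v ∈ C, v ≠ (0 : Fin (n+2))) → rWt B C ≤ lam * ((C.length : ℝ) - 1) by
    exact fun C hC h0 => h C.length C le_rfl hC h0
  intro N
  induction N with
  | zero => intro C hl hC _; have := hC.2.1; omega
  | succ N ih =>
    intro C hl hC h0
    by_cases hshort : C.length ≤ n + 3
    · exact hub C hC h0 hshort
    · obtain ⟨l₁, x, l₂, l₃, heq, hl₃⟩ := cycle_split hC h0 (by omega)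
      subst heq
      have hch := (isWalk_iff_chain' B (by simp)).mp hC.1
      have hsp := chain'_split hch
      have hC₁ := part_isCycle hch
      have hl₃' : 1 ≤ l₃.length := List.length_pos_iff.mpr hl₃
      have hlen : (l₁ ++ x :: (l₂ ++ x :: l₃)).length
          = l₁.length + l₂.length + l₃.length + 2 := by
        simp only [List.length_append, List.length_cons]; omega
      have hlen₂ : (l₁ ++ x :: l₃).length = l₁.length + l₃.length + 1 := by
        simp only [List.length_append, List.length_cons]; omega
      have hlen₁ : (x :: (l₂ ++ [x])).length = l₂.length + 2 := by
        simp only [List.length_cons, List.length_append, List.length_nil]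
      have hC₂ : isCycle B (l₁ ++ x :: l₃) := by
        refine ⟨(isWalk_iff_chain' B (by simp)).mpr hsp.1, by omega, ?_⟩
        rw [head?_split l₁ x l₃ (l₂ ++ x :: l₃), hC.2.2, getLast?_split]
      have h0₂ : ∀ v ∈ l₁ ++ x :: l₃, v ≠ (0 : Fin (n+2)) := by
        intro v hv
        refine h0 v ?_
        simp only [List.mem_append, List.mem_cons] at hv ⊢
        tauto
      have h0₁ : ∀ v ∈ x :: (l₂ ++ [x]), v ≠ (0 : Fin (n+2)) := by
        intro v hv
        refine h0 v ?_
        simp only [List.mem_cons, List.mem_append, List.mem_singleton] at hv ⊢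
        tauto
      have b₂ := ih (l₁ ++ x :: l₃) (by omega) hC₂ h0₂
      have b₁ := ih (x :: (l₂ ++ [x])) (by omega) hC₁ h0₁
      rw [rWt_split]
      have hcast : (((l₁ ++ x :: l₃).length : ℝ) - 1)
          + (((x :: (l₂ ++ [x])).length : ℝ) - 1)
          = (((l₁ ++ x :: (l₂ ++ x :: l₃)).length : ℝ) - 1) := by
        rw [hlen, hlen₂, hlen₁]; push_cast; ring
      have hmul : lam * (((l₁ ++ x :: l₃).length : ℝ) - 1)
          + lam * (((x :: (l₂ ++ [x])).length : ℝ) - 1)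
          = lam * (((l₁ ++ x :: (l₂ ++ x :: l₃)).length : ℝ) - 1) := by
        rw [← hcast]; ring
      linarith

/-- `lamStar` is negative and bounds cycle weights. -/
theorem lamStar_facts (htop : ∀ a b, B a b ≠ ⊤)
    (hcycE : ∀ W, isCycle B W → (∃ v ∈ W, v ≠ (0 : Fin (n+2))) → wWeight B W < 0)
    (hcyc : ∃ W, isCycle B W ∧ ∀ v ∈ W, v ≠ (0 : Fin (n+2))) :
    lamStar B 0 < 0 ∧
      ∀ C, isCycle B C → (∀ v ∈ C, v ≠ (0 : Fin (n+2))) →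
        rWt B C ≤ lamStar B 0 * ((C.length : ℝ) - 1) := by
  classical
  set S : Set ℝ := {x | ∃ C, isCycle B C ∧ (∀ v ∈ C, v ≠ (0 : Fin (n+2))) ∧
    C.length ≤ n + 3 ∧ x = rWt B C / ((C.length : ℝ) - 1)} with hS
  have hfin : S.Finite := by
    refine Set.Finite.subset (((List.finite_length_le (Fin (n+2)) (n+3)).image
      (fun C => rWt B C / ((C.length : ℝ) - 1)))) ?_
    rintro x ⟨C, _, _, h3, h4⟩
    exact ⟨C, h3, h4.symm⟩
  obtain ⟨C0, hC0, h00, hs0⟩ := exists_short_cycle hcyc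
  have hSne : S.Nonempty := ⟨_, C0, hC0, h00, hs0, rfl⟩
  set lams := sSup S with hlams
  have hmem : lams ∈ S := hSne.csSup_mem hfin
  have hpos : ∀ C : List (Fin (n+2)), isCycle B C → (0 : ℝ) < (C.length : ℝ) - 1 := by
    intro C hC
    have h2 := hC.2.1
    have : (2 : ℝ) ≤ (C.length : ℝ) := by exact_mod_cast h2
    linarith
  have hlamsneg : lams < 0 := by
    obtain ⟨C, hC, h0, _, heq⟩ := hmem
    rw [heq]
    exact div_neg_of_neg_of_pos (rWt_cycle_neg htop hcycE hC h0) (hpos C hC)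
  -- short cycle bound by lams
  have hshortub : ∀ C, isCycle B C → (∀ v ∈ C, v ≠ (0 : Fin (n+2))) → C.length ≤ n + 3 →
      rWt B C ≤ lams * ((C.length : ℝ) - 1) := by
    intro C hC h0 hlenC
    have hmean : rWt B C / ((C.length : ℝ) - 1) ≤ lams :=
      le_csSup hfin.bddAbove ⟨C, hC, h0, hlenC, rfl⟩
    exact (div_le_iff₀ (hpos C hC)).mp hmean
  have hcycle_lams := cycle_rWt_le_of_short_ub hshortub
  -- lamSet is bounded above by lams
  have hub : ∀ x ∈ lamSet B 0, x ≤ lams := by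
    rintro x ⟨W, hW, h0, r, hr, hx⟩
    have hrw : ((rWt B W : ℝ) : EReal) = (r : EReal) := by
      rw [← hr, wWeight, tw_eq_rWt B htop W 0 hW.1]
    have hr' : rWt B W = r := by exact_mod_cast hrw
    rw [hx, ← hr']
    exact (div_le_iff₀ (hpos W hW)).mpr (hcycle_lams W hW h0)
  have hlamSetne : (lamSet B 0).Nonempty := by
    obtain ⟨W, hW, h0⟩ := hcyc
    exact ⟨_, mean_mem_lamSet htop hW h0⟩
  have hlamle : lamStar B 0 ≤ lams := csSup_le hlamSetne hub
  refine ⟨lt_of_le_of_lt hlamle hlamsneg, ?_⟩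
  intro C hC h0
  have hmean : rWt B C / ((C.length : ℝ) - 1) ≤ lamStar B 0 :=
    le_csSup ⟨lams, hub⟩ (mean_mem_lamSet htop hC h0)
  exact (div_le_iff₀ (hpos C hC)).mp hmean

/-- Main combinatorial bound: walks avoiding `0` are bounded using a path bound and the
cycle bound. -/
theorem walk_bound {lam g : ℝ} (hlam : lam < 0) {i j : Fin (n+2)}
    (hpath : ∀ P, isWalk B P → P.Nodup → P.head? = some i → P.getLast? = some j →
      (∀ v ∈ P, v ≠ (0 : Fin (n+2))) → rWt B P ≤ g)
    (hcycle : ∀ C, isCycle B C → (∀ v ∈ C, v ≠ (0 : Fin (n+2))) →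
      rWt B C ≤ lam * ((C.length : ℝ) - 1)) :
    ∀ W, isWalk B W → W ≠ [] → W.head? = some i → W.getLast? = some j →
      (∀ v ∈ W, v ≠ (0 : Fin (n+2))) →
      rWt B W ≤ g + max (((W.length : ℝ) - 1) - ((n : ℝ) + 1)) 0 * lam := by
  suffices h : ∀ (N : ℕ) (W : List (Fin (n+2))), W.length ≤ N → isWalk B W → W ≠ [] →
      W.head? = some i → W.getLast? = some j → (∀ v ∈ W, v ≠ (0 : Fin (n+2))) →
      rWt B W ≤ g + max (((W.length : ℝ) - 1) - ((n : ℝ) + 1)) 0 * lam by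
    exact fun W hw hne hh hl h0 => h W.length W le_rfl hw hne hh hl h0
  intro N
  induction N with
  | zero =>
    intro W hlen _ hne
    have := List.length_pos_iff.mpr hne
    omega
  | succ N ih =>
    intro W hlen hw hne hh hl h0
    by_cases hnd : W.Nodup
    · have hg := hpath W hw hnd hh hl h0
      have hsh : W.length ≤ n + 1 := nodup_avoid_length h0 hnd
      have hmax : max (((W.length : ℝ) - 1) - ((n : ℝ) + 1)) 0 = 0 := by
        refine max_eq_right ?_
        have : (W.length : ℝ) ≤ (n : ℝ) + 1 := by exact_mod_cast hsh
        linarith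
      rw [hmax, zero_mul, add_zero]
      exact hg
    · obtain ⟨x, l₁, l₂, l₃, heq⟩ := split_of_not_nodup hnd
      subst heq
      have hch := (isWalk_iff_chain' B (by simp)).mp hw
      have hsp := chain'_split hch
      have hC₁ := part_isCycle hch
      have hlenW : (l₁ ++ x :: (l₂ ++ x :: l₃)).length
          = l₁.length + l₂.length + l₃.length + 2 := by
        simp only [List.length_append, List.length_cons]; omega
      have hlen₂ : (l₁ ++ x :: l₃).length = l₁.length + l₃.length + 1 := by
        simp only [List.length_append, List.length_cons]; omega
      have hlen₁ : (x :: (l₂ ++ [x])).length = l₂.length + 2 := by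
        simp only [List.length_cons, List.length_append, List.length_nil]
      have hw' : isWalk B (l₁ ++ x :: l₃) := (isWalk_iff_chain' B (by simp)).mpr hsp.1
      have hh' : (l₁ ++ x :: l₃).head? = some i := by
        rw [head?_split l₁ x l₃ (l₂ ++ x :: l₃)]; exact hh
      have hl' : (l₁ ++ x :: l₃).getLast? = some j := by
        rw [← getLast?_split]; exact hl
      have h0' : ∀ v ∈ l₁ ++ x :: l₃, v ≠ (0 : Fin (n+2)) := by
        intro v hv
        refine h0 v ?_
        simp only [List.mem_append, List.mem_cons] at hv ⊢
        tauto
      have h0₁ : ∀ v ∈ x :: (l₂ ++ [x]), v ≠ (0 : Fin (n+2)) := by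
        intro v hv
        refine h0 v ?_
        simp only [List.mem_cons, List.mem_append, List.mem_singleton] at hv ⊢
        tauto
      have hih := ih (l₁ ++ x :: l₃) (by omega) hw' (by simp) hh' hl' h0'
      have hcy := hcycle _ hC₁ h0₁
      rw [rWt_split]
      set a : ℝ := (((l₁ ++ x :: l₃).length : ℝ) - 1) - ((n : ℝ) + 1) with ha
      set d : ℝ := ((x :: (l₂ ++ [x])).length : ℝ) - 1 with hd
      have hd1 : (1 : ℝ) ≤ d := by
        rw [hd, hlen₁]; push_cast; linarith
      have had : a + d = (((l₁ ++ x :: (l₂ ++ x :: l₃)).length : ℝ) - 1) - ((n : ℝ) + 1) := by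
        rw [ha, hd, hlenW, hlen₂, hlen₁]; push_cast; ring
      have hkey : max (a + d) 0 ≤ max a 0 + d := by
        refine max_le ?_ ?_
        · have := le_max_left a 0; linarith
        · have := le_max_right a 0; linarith
      have hkey2 : (max a 0 + d) * lam ≤ max (a + d) 0 * lam :=
        mul_le_mul_of_nonpos_right hkey hlam.le
      have hexp : (max a 0 + d) * lam = max a 0 * lam + d * lam := by ring
      rw [← had]
      have hcy' : rWt B (x :: (l₂ ++ [x])) ≤ d * lam := by
        rw [mul_comm]; exact hcy
      linarith

end CycleMachinery
/-- full walks avoiding node `one` are strictly lighter than `w_i* + v_j*`. -/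
theorem rank_one_transient_statement3 {n : ℕ}
    (𝒳 : Set (Fin (n + 2) → Fin (n + 2) → EReal))
    (Asup Ainf : Fin (n + 2) → Fin (n + 2) → EReal)
    (hstand : Standing 𝒳 Asup Ainf 0)
    (k : ℕ) (hk : 1 ≤ k)
    (A : ℕ → Fin (n + 2) → Fin (n + 2) → EReal)
    (hA : ∀ l, 1 ≤ l → l ≤ k → A l ∈ 𝒳)
    (hcyc : ∃ W, isCycle Asup W ∧ ∀ v ∈ W, v ≠ (0 : Fin (n + 2)))
    (i j : Fin (n + 2))
    (w : ℝ) (hw : (w : EReal) = wStar A 0 k i)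
    (v : ℝ) (hv : (v : EReal) = vStar A 0 k j)
    -- `γ_{i,j}` is assumed finite here
    (g : ℝ) (hg : (g : EReal) = gammaE Asup 0 i j)
    (hkbig : (k : ℝ) > (w + v - g) / lamStar Asup 0 + ((n + 2 : ℝ) - 1)) :
    ∀ W, isFullWalk A k i j W → (0 : Fin (n + 2)) ∉ W →
      tw A 0 W < ((w + v : ℝ) : EReal) := by
  obtain ⟨-, -, hsup, -, htop, -, -, -, -, -, -, -, hcycE⟩ := hstand
  intro W hfull h0W
  have havoid : ∀ v ∈ W, v ≠ (0 : Fin (n+2)) := fun v hv hv0 => h0W (hv0 ▸ hv)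
  have hlenW : W.length = k + 1 := hfull.2.1
  have hmono : ∀ l, 0 + 1 ≤ l → l < 0 + W.length → ∀ a b, A l a b ≤ Asup a b := by
    intro l h1 h2 a b
    rw [hsup]
    exact le_biSup (fun X => X a b) (hA l (by omega) (by omega))
  have hwB : twalk (fun _ => Asup) 0 W := twalk_mono A Asup W 0 hfull.1 hmono
  have h_le : tw A 0 W ≤ tw (fun _ => Asup) 0 W := tw_le_tw A Asup W 0 hmono
  have h_eq : tw (fun _ => Asup) 0 W = ((rWt Asup W : ℝ) : EReal) :=
    tw_eq_rWt Asup htop W 0 hwB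
  obtain ⟨hlamneg, hcycb⟩ := lamStar_facts htop hcycE hcyc
  have hpath : ∀ P, isWalk Asup P → P.Nodup → P.head? = some i → P.getLast? = some j →
      (∀ v ∈ P, v ≠ (0 : Fin (n+2))) → rWt Asup P ≤ g := by
    intro P hwP hnd hh hl h0
    have hmem : ((rWt Asup P : ℝ) : EReal) ∈ {x : EReal | ∃ Q, isPath Asup Q ∧
        Q.head? = some i ∧ Q.getLast? = some j ∧ (∀ v ∈ Q, v ≠ (0 : Fin (n+2))) ∧
        x = wWeight Asup Q} :=
      ⟨P, ⟨hwP, hnd⟩, hh, hl, h0, (tw_eq_rWt Asup htop P 0 hwP).symm⟩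
    have h2 : ((rWt Asup P : ℝ) : EReal) ≤ (g : EReal) := by
      rw [hg]
      exact le_sSup hmem
    exact EReal.coe_le_coe_iff.mp h2
  have hWne : W ≠ [] := by
    intro h
    rw [h] at hlenW
    simp at hlenW
  have hbnd := walk_bound hlamneg hpath hcycb W hwB hWne hfull.2.2.1 hfull.2.2.2 havoid
  set lam := lamStar Asup 0 with hlamdef
  have hklen : ((W.length : ℝ) - 1) - ((n : ℝ) + 1) = (k : ℝ) - ((n : ℝ) + 1) := by
    rw [hlenW]; push_cast; ring
  have hdiv : (w + v - g) / lam < (k : ℝ) - ((n : ℝ) + 1) := by linarith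
  have h1 : ((k : ℝ) - ((n : ℝ) + 1)) * lam < w + v - g := (div_lt_iff_of_neg hlamneg).mp hdiv
  have h3 : max ((k : ℝ) - ((n : ℝ) + 1)) 0 * lam ≤ ((k : ℝ) - ((n : ℝ) + 1)) * lam :=
    mul_le_mul_of_nonpos_right (le_max_left _ _) hlamneg.le
  rw [hklen] at hbnd
  have hfin : rWt Asup W < w + v := by linarith
  calc tw A 0 W ≤ ((rWt Asup W : ℝ) : EReal) := h_le.trans h_eq.le
    _ < ((w + v : ℝ) : EReal) := EReal.coe_lt_coe_iff.mpr hfin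


end MaxPlusTransient
end
end
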